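/- For fixed S positive semidefinite, the kernel (μ, μ') ↦ exp(-⟨Σ(μ + μ'), S⟩) is a positive definite kernel on probability measures on ℝ^n with finite moments: for any μ_1,…,μ_k and c_1,…,c_k ∈ ℝ, Σ_{i,j} c_i c_j exp(-⟨Σ(μ_i + μ_j), S⟩) ≥ 0. -/

import Mathlib

/-!
Writing `m, m'` for the means, `Σ(μ + μ') = Σ(μ) + Σ(μ') - (m m'ᵀ + m' mᵀ)`, so the kernel factors
as `d_i · exp (2 m_iᵀ S m_j) · d_j` with `d_i = exp (-⟨Σ(μ_i), S⟩)`. The matrix `(2 m_iᵀ S m_j)` is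
a congruence of `S`, hence positive semidefinite; by the Schur product theorem so are its entrywise
powers, and therefore so is its entrywise exponential, a series of them with nonnegative
coefficients. A diagonal congruence preserves this.
-/

open Finset Matrix

noncomputable def meanVec {n : ℕ} (μ : (Fin n → ℝ) →₀ ℝ) : Fin n → ℝ :=
  fun i => ∑ p ∈ μ.support, μ p * p i

noncomputable def varMat {n : ℕ} (μ : (Fin n → ℝ) →₀ ℝ) : Matrix (Fin n) (Fin n) ℝ :=
  Matrix.of fun i j =>
    (∑ p ∈ μ.support, μ p * p i * p j) - meanVec μ i * meanVec μ j

theorem Finsupp.sum_support_add_mul {α R : Type*} [Semiring R] (μ ν : α →₀ R) (f : α → R) :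
    ∑ p ∈ (μ + ν).support, (μ + ν) p * f p
      = ∑ p ∈ μ.support, μ p * f p + ∑ p ∈ ν.support, ν p * f p :=
  Finsupp.sum_add_index' (h := fun p v => v * f p) (fun _ => zero_mul _) fun _ _ _ => add_mul _ _ _

section Moments

variable {n : ℕ}

theorem meanVec_add (μ ν : (Fin n → ℝ) →₀ ℝ) : meanVec (μ + ν) = meanVec μ + meanVec ν :=
  funext fun i => Finsupp.sum_support_add_mul μ ν (· i)

theorem varMat_add (μ ν : (Fin n → ℝ) →₀ ℝ) :
    varMat (μ + ν) = varMat μ + varMat ν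
      - (vecMulVec (meanVec μ) (meanVec ν) + vecMulVec (meanVec ν) (meanVec μ)) := by
  ext i j
  have hmoment := Finsupp.sum_support_add_mul μ ν fun p => p i * p j
  simp only [← mul_assoc] at hmoment
  simp only [varMat, of_apply, hmoment, meanVec_add, Pi.add_apply, Matrix.sub_apply,
    Matrix.add_apply, vecMulVec_apply]
  ring

theorem trace_varMat_add_mul {S : Matrix (Fin n) (Fin n) ℝ} (hS : S.IsHermitian)
    (μ ν : (Fin n → ℝ) →₀ ℝ) :
    (varMat (μ + ν) * S).trace = (varMat μ * S).trace + (varMat ν * S).trace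
      - 2 * (meanVec μ ⬝ᵥ S *ᵥ meanVec ν) := by
  have hvecMul : ∀ u v : Fin n → ℝ, u ⬝ᵥ (v ᵥ* S) = v ⬝ᵥ S *ᵥ u := fun u v => by
    rw [dotProduct_comm, dotProduct_mulVec]
  have hswap : meanVec ν ⬝ᵥ S *ᵥ meanVec μ = meanVec μ ⬝ᵥ S *ᵥ meanVec ν := by
    rw [dotProduct_mulVec, ← mulVec_transpose, ← conjTranspose_eq_transpose_of_trivial, hS.eq,
      dotProduct_comm]
  simp only [varMat_add, sub_mul, add_mul, trace_sub, trace_add, vecMulVec_mul, trace_vecMulVec,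
    hvecMul, hswap]
  ring

theorem exp_neg_trace_varMat_add_mul {S : Matrix (Fin n) (Fin n) ℝ} (hS : S.IsHermitian)
    (μ ν : (Fin n → ℝ) →₀ ℝ) :
    Real.exp (-(varMat (μ + ν) * S).trace)
      = Real.exp (-(varMat μ * S).trace) * Real.exp (2 * (meanVec μ ⬝ᵥ S *ᵥ meanVec ν))
        * Real.exp (-(varMat ν * S).trace) := by
  rw [← Real.exp_add, ← Real.exp_add, trace_varMat_add_mul hS]
  ring_nf

end Moments

namespace Matrix

open scoped ComplexOrder

variable {ι : Type*} [Fintype ι]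

theorem PosSemidef.map_pow {𝕜 : Type*} [RCLike 𝕜] {A : Matrix ι ι 𝕜} (hA : A.PosSemidef)
    (m : ℕ) : (A.map (· ^ m)).PosSemidef := by
  induction m with
  | zero =>
    have hones : A.map (· ^ 0) = vecMulVec 1 (star 1) := by ext; simp [vecMulVec_apply]
    exact hones ▸ posSemidef_vecMulVec_self_star 1
  | succ m ih =>
    have hsucc : A.map (· ^ (m + 1)) = A.map (· ^ m) ⊙ A := by ext; simp [pow_succ]
    exact hsucc ▸ ih.hadamard hA

theorem PosSemidef.map_exp {A : Matrix ι ι ℝ} (hA : A.PosSemidef) :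
    (A.map Real.exp).PosSemidef := by
  refine .of_dotProduct_mulVec_nonneg (hA.isHermitian.map _ fun _ => rfl) fun x => ?_
  have hseries : HasSum (fun m : ℕ => star x ⬝ᵥ A.map (· ^ m) *ᵥ x / m.factorial)
      (star x ⬝ᵥ A.map Real.exp *ᵥ x) := by
    simp only [dotProduct, mulVec, Finset.sum_div, Finset.mul_sum]
    refine hasSum_sum fun i _ => hasSum_sum fun j _ => ?_
    have h : HasSum (fun m : ℕ => A i j ^ m / m.factorial) (Real.exp (A i j)) :=
      Real.exp_eq_exp_ℝ ▸ NormedSpace.expSeries_div_hasSum_exp (A i j)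
    simp only [Matrix.map_apply]
    rw [show star x i * (Real.exp (A i j) * x j) = star x i * x j * Real.exp (A i j) by ring]
    exact (h.mul_left _).congr_fun fun m => by ring
  exact hseries.nonneg fun m =>
    div_nonneg (hA.map_pow m |>.dotProduct_mulVec_nonneg x) (by positivity)

theorem PosSemidef.sum_sum_mul_mul_nonneg {K : Matrix ι ι ℝ} (hK : K.PosSemidef) (c : ι → ℝ) :
    0 ≤ ∑ i, ∑ j, c i * c j * K i j := by
  have := hK.dotProduct_mulVec_nonneg c
  simp only [dotProduct, mulVec, Finset.mul_sum, star_trivial] at this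
  exact this.trans_eq <| Finset.sum_congr rfl fun i _ => Finset.sum_congr rfl fun j _ => by ring

end Matrix

theorem exp_neg_frobenius_varMat_posDef_general {n k : ℕ} (S : Matrix (Fin n) (Fin n) ℝ)
    (hS : S.PosSemidef) (μ : Fin k → ((Fin n → ℝ) →₀ ℝ))
    (c : Fin k → ℝ) :
    0 ≤ ∑ i, ∑ j, c i * c j * Real.exp (-((varMat (μ i + μ j)) * S).trace) := by
  let M : Matrix (Fin k) (Fin n) ℝ := .of fun i => meanVec (μ i)
  let D : Matrix (Fin k) (Fin k) ℝ := diagonal fun i => Real.exp (-(varMat (μ i) * S).trace)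
  let K := D * ((2 : ℝ) • (M * S * Mᴴ)).map Real.exp * Dᴴ
  have hK : K.PosSemidef :=
    ((hS.mul_mul_conjTranspose_same M).smul zero_le_two).map_exp.mul_mul_conjTranspose_same D
  have hK_apply : ∀ i j, K i j = Real.exp (-(varMat (μ i + μ j) * S).trace) := by
    intro i j
    rw [exp_neg_trace_varMat_add_mul hS.isHermitian]
    have hgram : (M * S * Mᴴ) i j = meanVec (μ i) ⬝ᵥ S *ᵥ meanVec (μ j) := by
      rw [dotProduct_mulVec]
      simp only [mul_apply, dotProduct, vecMul, M, of_apply, conjTranspose_apply, star_trivial]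
    simp only [K, D, diagonal_conjTranspose, star_trivial, diagonal_mul, mul_diagonal, map_apply,
      Matrix.smul_apply, smul_eq_mul, hgram]
  simpa only [hK_apply] using hK.sum_sum_mul_mul_nonneg c

/-- (μ,μ') ↦ exp(-⟨Σ(μ+μ'), S⟩) is a positive definite kernel on probability measures. -/
theorem exp_neg_frobenius_varMat_posDef {n k : ℕ} (S : Matrix (Fin n) (Fin n) ℝ)
    (hS : S.PosSemidef) (μ : Fin k → ((Fin n → ℝ) →₀ ℝ))
    (hpos : ∀ i p, 0 ≤ μ i p) (hprob : ∀ i, ∑ p ∈ (μ i).support, μ i p = 1)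
    (c : Fin k → ℝ) :
    0 ≤ ∑ i, ∑ j, c i * c j * Real.exp (-((varMat (μ i + μ j)) * S).trace) :=
  exp_neg_frobenius_varMat_posDef_general S hS μ c
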